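/- Let H be a simple bipartite matching covered graph with color classes A and B, let b ∈ B be a vertex of degree d ≥ 3, and let ba_1, ba_2, …, ba_d be the edges of H incident with b. Suppose that the edges ba_1, …, ba_r, where 0 < r ≤ d, are all non-removable in H. Then there exist a partition of A into parts A_0, A_1, …, A_r and a partition of B into parts B_0, B_1, …, B_r (the parts A_i and B_i for 1 ≤ i ≤ r being nonempty) such that b ∈ B_0 and, for every i ∈ {1, 2, …, r}: (i) |A_i| = |B_i|, (ii) a_i ∈ A_i, and (iii) the neighbourhood of A_i in H is exactly B_i ∪ {b}; in particular, ba_i is the only edge of H joining a vertex of B_0 to a vertex of A_i. -/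

import Mathlib

/-! Preamble: definitions for matching covered graphs, bricks, removable
doubletons, R-compatible/R-thin edges, retracts, ladders, partial biwheels,
R-configurations, and the eleven infinite families. -/

/-- The graph has a perfect matching. -/
def HasPerfMatching {V : Type*} (G : SimpleGraph V) : Prop :=
  ∃ M : G.Subgraph, M.IsPerfectMatching

/-- A graph (with at least two vertices) is matching covered if it is connected
and each of its edges lies in some perfect matching. -/
def MatchingCovered {V : Type*} (G : SimpleGraph V) : Prop :=
  2 ≤ Nat.card V ∧ G.Connected ∧
    ∀ e ∈ G.edgeSet, ∃ M : G.Subgraph, M.IsPerfectMatching ∧ e ∈ M.edgeSet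

/-- An edge of a matching covered graph is removable if deleting it leaves a
matching covered graph. -/
def RemovableEdge {V : Type*} (G : SimpleGraph V) (e : Sym2 V) : Prop :=
  e ∈ G.edgeSet ∧ MatchingCovered (G.deleteEdges {e})

/-- The number of odd connected components. -/
noncomputable def oddCompCount {V : Type*} (G : SimpleGraph V) : ℕ :=
  Nat.card {c : G.ConnectedComponent // Odd (Nat.card c.supp)}

/-- `S` is a barrier of `G`: `S` is nonempty and the number of odd components
of `G − S` equals `|S|`. -/
def IsBarrierOf {V : Type*} (G : SimpleGraph V) (S : Set V) : Prop :=
  S.Nonempty ∧ oddCompCount (G.induce (Sᶜ : Set V)) = S.ncard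

/-- Bicritical: at least four vertices, and deleting any two distinct vertices
leaves a graph with a perfect matching. -/
def BicriticalGraph {V : Type*} (G : SimpleGraph V) : Prop :=
  4 ≤ Nat.card V ∧ ∀ u v : V, u ≠ v →
    HasPerfMatching (G.induce (({u, v} : Set V)ᶜ))

/-- 3-connected: at least four vertices, and deleting any set of at most two
vertices leaves a connected graph. -/
def ThreeConnectedGraph {V : Type*} (G : SimpleGraph V) : Prop :=
  4 ≤ Nat.card V ∧ ∀ S : Set V, S.ncard ≤ 2 → (G.induce (Sᶜ : Set V)).Connected

/-- A brick is a 3-connected bicritical graph. -/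
def BrickGraph {V : Type*} (G : SimpleGraph V) : Prop :=
  ThreeConnectedGraph G ∧ BicriticalGraph G

/-- `A`, `B` form a bipartition of `G`. -/
def BipartitionOf {V : Type*} (G : SimpleGraph V) (A B : Set V) : Prop :=
  A ∪ B = Set.univ ∧ Disjoint A B ∧ ∀ ⦃u v : V⦄, G.Adj u v → (u ∈ A ↔ v ∈ B)

/-- `G` is bipartite. -/
def BipartiteGraph {V : Type*} (G : SimpleGraph V) : Prop :=
  ∃ A B : Set V, BipartitionOf G A B

/-- `{α, β}` is a removable doubleton of `G`: a pair of distinct edges whose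
deletion leaves a bipartite matching covered graph. -/
def RemovableDoubleton {V : Type*} (G : SimpleGraph V) (α β : Sym2 V) : Prop :=
  α ≠ β ∧ α ∈ G.edgeSet ∧ β ∈ G.edgeSet ∧
    BipartiteGraph (G.deleteEdges {α, β}) ∧ MatchingCovered (G.deleteEdges {α, β})

/-- An `R`-brick: a brick with a fixed removable doubleton `R = {α, β}`. -/
def RBrick {V : Type*} (G : SimpleGraph V) (α β : Sym2 V) : Prop :=
  BrickGraph G ∧ RemovableDoubleton G α β

/-- `V(R)`: the set of the four ends of the doubleton edges. -/
def VR {V : Type*} (α β : Sym2 V) : Set V := {v | v ∈ α ∨ v ∈ β}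

/-- `e` is `R`-compatible: it is an edge of `H := G − R` and is removable in
both `G` and `H`. -/
def RCompatible {V : Type*} (G : SimpleGraph V) (α β e : Sym2 V) : Prop :=
  e ∈ (G.deleteEdges {α, β}).edgeSet ∧
    MatchingCovered (G.deleteEdges {e}) ∧
    MatchingCovered ((G.deleteEdges {α, β}).deleteEdges {e})

/-- `e` is `R`-thin: `R`-compatible, and every barrier of `G − e` has at most
two vertices. -/
def RThin {V : Type*} (G : SimpleGraph V) (α β e : Sym2 V) : Prop :=
  RCompatible G α β e ∧
    ∀ S : Set V, IsBarrierOf (G.deleteEdges {e}) S → S.ncard ≤ 2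

/-- The number of maximal nontrivial barriers of a graph. -/
noncomputable def barrierIndex {V : Type*} (G : SimpleGraph V) : ℕ :=
  Set.ncard {S : Set V | IsBarrierOf G S ∧ 2 ≤ S.ncard ∧
    ∀ T : Set V, IsBarrierOf G T → S ⊆ T → T = S}

/-- Degree of a vertex (as the cardinality of its neighbourhood). -/
noncomputable def degOf {V : Type*} (G : SimpleGraph V) (v : V) : ℕ :=
  (G.neighborSet v).ncard

/-- The relation identifying each degree-two vertex with its neighbours
(bicontraction of all degree-two vertices at once). -/
def bicontractPairRel {V : Type*} (G : SimpleGraph V) (u v : V) : Prop :=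
  G.Adj u v ∧ (degOf G u = 2 ∨ degOf G v = 2)

/-- The vertex identifications performed when taking the retract. -/
def retractSetoid {V : Type*} (G : SimpleGraph V) : Setoid V :=
  Relation.EqvGen.setoid (bicontractPairRel G)

/-- The retract of `G` (as a simple graph on the quotient). -/
def retractGraph {V : Type*} (G : SimpleGraph V) :
    SimpleGraph (Quotient (retractSetoid G)) where
  Adj X Y := X ≠ Y ∧ ∃ u v : V,
    Quotient.mk (retractSetoid G) u = X ∧ Quotient.mk (retractSetoid G) v = Y ∧ G.Adj u v
  symm := by
    constructor
    rintro X Y ⟨hne, u, v, hu, hv, huv⟩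
    exact ⟨hne.symm, v, u, hv, hu, huv.symm⟩
  loopless := by
    constructor
    rintro X ⟨hne, -⟩
    exact hne rfl

/-- The retract of `G` has a pair of parallel edges. -/
def retractHasParallel {V : Type*} (G : SimpleGraph V) : Prop :=
  ∃ p q p' q' : V, G.Adj p q ∧ G.Adj p' q' ∧ s(p, q) ≠ s(p', q') ∧
    ¬ Relation.EqvGen (bicontractPairRel G) p q ∧
    ((Relation.EqvGen (bicontractPairRel G) p p' ∧
        Relation.EqvGen (bicontractPairRel G) q q') ∨
     (Relation.EqvGen (bicontractPairRel G) p q' ∧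
        Relation.EqvGen (bicontractPairRel G) q p'))

/-- `e` is strictly `R`-thin: `R`-thin and the retract of `G − e` has no
parallel edges. -/
def StrictlyRThin {V : Type*} (G : SimpleGraph V) (α β e : Sym2 V) : Prop :=
  RThin G α β e ∧ ¬ retractHasParallel (G.deleteEdges {e})

/-- The ladder with `m` rungs: two paths `x₀…x_{m-1}` (first coordinate `0`)
and `y₀…y_{m-1}` (first coordinate `1`) together with the rungs `xᵢyᵢ`. -/
def ladderGraph (m : ℕ) : SimpleGraph (Fin 2 × Fin m) :=
  SimpleGraph.fromRel (fun p q =>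
    (p.1 = q.1 ∧ p.2.val + 1 = q.2.val) ∨ (p.1 ≠ q.1 ∧ p.2 = q.2))

/-- The partial biwheel on the odd path `x₀…x_{2k-1}` (the `inl` vertices)
with hubs `u = inr 0` (joined to the even-indexed path vertices) and
`w = inr 1` (joined to the odd-indexed path vertices). -/
def biwheelGraph (k : ℕ) : SimpleGraph (Fin (2 * k) ⊕ Fin 2) :=
  SimpleGraph.fromRel (fun p q =>
    match p, q with
    | Sum.inl i, Sum.inl j => i.val + 1 = j.val
    | Sum.inr h, Sum.inl i => (h = 0 ∧ i.val % 2 = 0) ∨ (h = 1 ∧ i.val % 2 = 1)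
    | _, _ => False)

/-- The subgraph `K` of `Γ` is a ladder with `m` rungs and corners `a u b w`:
`au` and `bw` are its external rungs, labelled according to the convention
that `a` and `w` lie in one colour class and `b` and `u` in the other. -/
def LadderOn {W : Type*} (Γ : SimpleGraph W) (K : Γ.Subgraph) (m : ℕ)
    (a u b w : W) : Prop :=
  ∃ (hm : 3 ≤ m) (φ : ladderGraph m ≃g K.coe),
    (φ ((0 : Fin 2), (⟨0, by omega⟩ : Fin m))).val = a ∧
    (φ ((1 : Fin 2), (⟨0, by omega⟩ : Fin m))).val = u ∧
    (if m % 2 = 1 then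
        (φ ((0 : Fin 2), (⟨m - 1, by omega⟩ : Fin m))).val = w ∧
        (φ ((1 : Fin 2), (⟨m - 1, by omega⟩ : Fin m))).val = b
      else
        (φ ((1 : Fin 2), (⟨m - 1, by omega⟩ : Fin m))).val = w ∧
        (φ ((0 : Fin 2), (⟨m - 1, by omega⟩ : Fin m))).val = b)

/-- The subgraph `K` of `Γ` is a partial biwheel (parameter `k`, order `2k+2`)
with ends `a`, `b` and hubs `u`, `w`; its external spokes are `au` and `bw`. -/
def BiwheelOn {W : Type*} (Γ : SimpleGraph W) (K : Γ.Subgraph) (k : ℕ)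
    (a u b w : W) : Prop :=
  ∃ (hk : 2 ≤ k) (φ : biwheelGraph k ≃g K.coe),
    (φ (Sum.inl (⟨0, by omega⟩ : Fin (2 * k)))).val = a ∧
    (φ (Sum.inl (⟨2 * k - 1, by omega⟩ : Fin (2 * k)))).val = b ∧
    (φ (Sum.inr 0)).val = u ∧
    (φ (Sum.inr 1)).val = w

/-- Truncated biwheel: a spanning partial biwheel plus the edges `aw`, `bu`. -/
def IsTruncatedBiwheel {V : Type*} (G : SimpleGraph V) : Prop :=
  ∃ (K : G.Subgraph) (k : ℕ) (a u b w : V),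
    BiwheelOn G K k a u b w ∧ K.verts = Set.univ ∧
    G.edgeSet = K.edgeSet ∪ {s(a, w), s(b, u)}

/-- Prism: a spanning odd ladder plus the edges `aw`, `bu`. -/
def IsPrism {V : Type*} (G : SimpleGraph V) : Prop :=
  ∃ (K : G.Subgraph) (m : ℕ) (a u b w : V),
    Odd m ∧ LadderOn G K m a u b w ∧ K.verts = Set.univ ∧
    G.edgeSet = K.edgeSet ∪ {s(a, w), s(b, u)}

/-- Möbius ladder: a spanning even ladder plus the edges `aw`, `bu`;
by convention `K₄` is also a Möbius ladder. -/
def IsMobiusLadder {V : Type*} (G : SimpleGraph V) : Prop :=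
  (∃ (K : G.Subgraph) (m : ℕ) (a u b w : V),
    Even m ∧ LadderOn G K m a u b w ∧ K.verts = Set.univ ∧
    G.edgeSet = K.edgeSet ∪ {s(a, w), s(b, u)}) ∨
  Nonempty (G ≃g (⊤ : SimpleGraph (Fin 4)))

/-- Staircase: a ladder plus two new vertices `a₂`, `b₂` and the five edges
`a a₂`, `u a₂`, `b b₂`, `w b₂`, `a₂ b₂`. -/
def IsStaircase {V : Type*} (G : SimpleGraph V) : Prop :=
  ∃ (K : G.Subgraph) (m : ℕ) (a u b w a2 b2 : V),
    LadderOn G K m a u b w ∧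
    a2 ∉ K.verts ∧ b2 ∉ K.verts ∧ a2 ≠ b2 ∧
    K.verts ∪ {a2, b2} = Set.univ ∧
    G.edgeSet = K.edgeSet ∪ {s(a, a2), s(u, a2), s(b, b2), s(w, b2), s(a2, b2)}

/-- Pseudo-biwheel: a partial biwheel of order at least eight plus two new
vertices `a₂`, `b₂` and the five edges `a a₂`, `u a₂`, `b b₂`, `w b₂`,
`a₂ b₂`. -/
def IsPseudoBiwheel {V : Type*} (G : SimpleGraph V) : Prop :=
  ∃ (K : G.Subgraph) (k : ℕ) (a u b w a2 b2 : V),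
    3 ≤ k ∧ BiwheelOn G K k a u b w ∧
    a2 ∉ K.verts ∧ b2 ∉ K.verts ∧ a2 ≠ b2 ∧
    K.verts ∪ {a2, b2} = Set.univ ∧
    G.edgeSet = K.edgeSet ∪ {s(a, a2), s(u, a2), s(b, b2), s(w, b2), s(a2, b2)}

/-- Double biwheel of type I: two partial biwheels sharing precisely their
hubs `u`, `w`, plus the edges `a₁a₂` and `b₁b₂`. -/
def IsDoubleBiwheelI {V : Type*} (G : SimpleGraph V) : Prop :=
  ∃ (K1 K2 : G.Subgraph) (k1 k2 : ℕ) (a1 b1 a2 b2 u w : V),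
    BiwheelOn G K1 k1 a1 u b1 w ∧ BiwheelOn G K2 k2 a2 u b2 w ∧
    K1.verts ∩ K2.verts = {u, w} ∧ K1.verts ∪ K2.verts = Set.univ ∧
    G.edgeSet = K1.edgeSet ∪ K2.edgeSet ∪ {s(a1, a2), s(b1, b2)}

/-- Double ladder of type I. -/
def IsDoubleLadderI {V : Type*} (G : SimpleGraph V) : Prop :=
  ∃ (K1 K2 : G.Subgraph) (m1 m2 : ℕ) (a1 b1 a2 b2 u w : V),
    LadderOn G K1 m1 a1 u b1 w ∧ LadderOn G K2 m2 a2 u b2 w ∧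
    K1.verts ∩ K2.verts = {u, w} ∧ K1.verts ∪ K2.verts = Set.univ ∧
    G.edgeSet = K1.edgeSet ∪ K2.edgeSet ∪ {s(a1, a2), s(b1, b2)}

/-- Laddered biwheel of type I. -/
def IsLadderedBiwheelI {V : Type*} (G : SimpleGraph V) : Prop :=
  ∃ (K1 K2 : G.Subgraph) (k1 m2 : ℕ) (a1 b1 a2 b2 u w : V),
    BiwheelOn G K1 k1 a1 u b1 w ∧ LadderOn G K2 m2 a2 u b2 w ∧
    K1.verts ∩ K2.verts = {u, w} ∧ K1.verts ∪ K2.verts = Set.univ ∧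
    G.edgeSet = K1.edgeSet ∪ K2.edgeSet ∪ {s(a1, a2), s(b1, b2)}

/-- Double biwheel of type II: two vertex-disjoint partial biwheels of order
at least eight plus the four edges `a₁a₂`, `b₁b₂`, `u₁w₂`, `w₁u₂`. -/
def IsDoubleBiwheelII {V : Type*} (G : SimpleGraph V) : Prop :=
  ∃ (K1 K2 : G.Subgraph) (k1 k2 : ℕ) (a1 u1 b1 w1 a2 u2 b2 w2 : V),
    3 ≤ k1 ∧ 3 ≤ k2 ∧
    BiwheelOn G K1 k1 a1 u1 b1 w1 ∧ BiwheelOn G K2 k2 a2 u2 b2 w2 ∧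
    K1.verts ∩ K2.verts = ∅ ∧ K1.verts ∪ K2.verts = Set.univ ∧
    G.edgeSet = K1.edgeSet ∪ K2.edgeSet ∪
      {s(a1, a2), s(b1, b2), s(u1, w2), s(w1, u2)}

/-- Double ladder of type II. -/
def IsDoubleLadderII {V : Type*} (G : SimpleGraph V) : Prop :=
  ∃ (K1 K2 : G.Subgraph) (m1 m2 : ℕ) (a1 u1 b1 w1 a2 u2 b2 w2 : V),
    LadderOn G K1 m1 a1 u1 b1 w1 ∧ LadderOn G K2 m2 a2 u2 b2 w2 ∧
    K1.verts ∩ K2.verts = ∅ ∧ K1.verts ∪ K2.verts = Set.univ ∧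
    G.edgeSet = K1.edgeSet ∪ K2.edgeSet ∪
      {s(a1, a2), s(b1, b2), s(u1, w2), s(w1, u2)}

/-- Laddered biwheel of type II. -/
def IsLadderedBiwheelII {V : Type*} (G : SimpleGraph V) : Prop :=
  ∃ (K1 K2 : G.Subgraph) (k1 m2 : ℕ) (a1 u1 b1 w1 a2 u2 b2 w2 : V),
    3 ≤ k1 ∧
    BiwheelOn G K1 k1 a1 u1 b1 w1 ∧ LadderOn G K2 m2 a2 u2 b2 w2 ∧
    K1.verts ∩ K2.verts = ∅ ∧ K1.verts ∪ K2.verts = Set.univ ∧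
    G.edgeSet = K1.edgeSet ∪ K2.edgeSet ∪
      {s(a1, a2), s(b1, b2), s(u1, w2), s(w1, u2)}

/-- Membership in one of the eleven infinite families. -/
def InEleven {V : Type*} (G : SimpleGraph V) : Prop :=
  IsTruncatedBiwheel G ∨ IsPrism G ∨ IsMobiusLadder G ∨ IsStaircase G ∨
  IsPseudoBiwheel G ∨ IsDoubleBiwheelI G ∨ IsDoubleLadderI G ∨
  IsLadderedBiwheelI G ∨ IsDoubleBiwheelII G ∨ IsDoubleLadderII G ∨
  IsLadderedBiwheelII G

/-- An `R`-ladder configuration: a subgraph `K` of `H := G − R` which is a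
ladder with external rungs `au` and `bw` (free corners `u`, `w`) such that
every vertex of `K` except possibly `u` and `w` is cubic in `G`, the corners
`a` and `b` lie in `V(R)`, and every internal rung is an `R`-thin edge of `G`
whose index is two. -/
def RLadderConfig {V : Type*} (G : SimpleGraph V) (α β : Sym2 V)
    (K : (G.deleteEdges {α, β}).Subgraph) (a u b w : V) : Prop :=
  ∃ (m : ℕ) (hm : 3 ≤ m) (φ : ladderGraph m ≃g K.coe),
    (φ ((0 : Fin 2), (⟨0, by omega⟩ : Fin m))).val = a ∧
    (φ ((1 : Fin 2), (⟨0, by omega⟩ : Fin m))).val = u ∧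
    (if m % 2 = 1 then
        (φ ((0 : Fin 2), (⟨m - 1, by omega⟩ : Fin m))).val = w ∧
        (φ ((1 : Fin 2), (⟨m - 1, by omega⟩ : Fin m))).val = b
      else
        (φ ((1 : Fin 2), (⟨m - 1, by omega⟩ : Fin m))).val = w ∧
        (φ ((0 : Fin 2), (⟨m - 1, by omega⟩ : Fin m))).val = b) ∧
    (∀ v ∈ K.verts, v ≠ u → v ≠ w → degOf G v = 3) ∧
    a ∈ VR α β ∧ b ∈ VR α β ∧
    (∀ i : Fin m, 0 < i.val → i.val < m - 1 →
      RThin G α β s((φ ((0 : Fin 2), i)).val, (φ ((1 : Fin 2), i)).val) ∧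
      barrierIndex
        (G.deleteEdges {s((φ ((0 : Fin 2), i)).val, (φ ((1 : Fin 2), i)).val)}) = 2)

/-- An `R`-biwheel configuration: a subgraph `K` of `H := G − R` which is a
partial biwheel with external spokes `au` and `bw` (hubs `u`, `w`) such that
the hubs are not cubic in `G`, every other vertex of `K` is cubic in `G`, the
ends `a` and `b` lie in `V(R)`, and every internal spoke is an `R`-thin edge
of `G` whose index is one. -/
def RBiwheelConfig {V : Type*} (G : SimpleGraph V) (α β : Sym2 V)
    (K : (G.deleteEdges {α, β}).Subgraph) (a u b w : V) : Prop :=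
  ∃ (k : ℕ) (hk : 2 ≤ k) (φ : biwheelGraph k ≃g K.coe),
    (φ (Sum.inl (⟨0, by omega⟩ : Fin (2 * k)))).val = a ∧
    (φ (Sum.inl (⟨2 * k - 1, by omega⟩ : Fin (2 * k)))).val = b ∧
    (φ (Sum.inr 0)).val = u ∧
    (φ (Sum.inr 1)).val = w ∧
    degOf G u ≠ 3 ∧ degOf G w ≠ 3 ∧
    (∀ v ∈ K.verts, v ≠ u → v ≠ w → degOf G v = 3) ∧
    a ∈ VR α β ∧ b ∈ VR α β ∧
    (∀ e ∈ K.edgeSet, (u ∈ e ∨ w ∈ e) → e ≠ s(a, u) → e ≠ s(b, w) →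
      RThin G α β e ∧ barrierIndex (G.deleteEdges {e}) = 1)

/-- An `R`-configuration: an `R`-ladder or an `R`-biwheel, with free corners
`u` and `w`. -/
def RConfig {V : Type*} (G : SimpleGraph V) (α β : Sym2 V)
    (K : (G.deleteEdges {α, β}).Subgraph) (a u b w : V) : Prop :=
  RLadderConfig G α β K a u b w ∨ RBiwheelConfig G α β K a u b w

/-- A 4-cycle on the four (distinct) vertices `v0 v1 v2 v3`. -/
def Is4Cycle {V : Type*} (H : SimpleGraph V) (v0 v1 v2 v3 : V) : Prop :=
  v0 ≠ v1 ∧ v0 ≠ v2 ∧ v0 ≠ v3 ∧ v1 ≠ v2 ∧ v1 ≠ v3 ∧ v2 ≠ v3 ∧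
  H.Adj v0 v1 ∧ H.Adj v1 v2 ∧ H.Adj v2 v3 ∧ H.Adj v3 v0

/-- The cut `∂(X)`. -/
def edgeCutOf {V : Type*} (G : SimpleGraph V) (X : Set V) : Set (Sym2 V) :=
  {e | e ∈ G.edgeSet ∧ ∃ p q : V, e = s(p, q) ∧ p ∈ X ∧ q ∉ X}

/-- The cut `∂(X)` is tight: every perfect matching contains exactly one of
its edges. -/
def TightCut {V : Type*} (G : SimpleGraph V) (X : Set V) : Prop :=
  ∀ M : G.Subgraph, M.IsPerfectMatching → (M.edgeSet ∩ edgeCutOf G X).ncard = 1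

/-- A brace: a bipartite matching covered graph with no nontrivial tight cut. -/
def IsBrace {V : Type*} (G : SimpleGraph V) : Prop :=
  BipartiteGraph G ∧ MatchingCovered G ∧
    ¬ ∃ X : Set V, 2 ≤ X.ncard ∧ 2 ≤ Xᶜ.ncard ∧ TightCut G X

/-!
If the edge `ub` (`u ∈ A`) of a bipartite matching covered graph is non-removable, Hall's
theorem, applied to `H - ub` against the strict Hall condition `|N(X)| > |X|` of `H`, yields a
set `X ∋ u` in `A` with `|N(X)| = |X| + 1` in which `u` is the only neighbour of `b`. Since `b`
has a third neighbour outside any two such sets, uncrossing (`|N(·)|` is submodular) shows that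
the sets for different non-removable edges at `b` are disjoint, and so are their neighbourhoods
apart from `b`. These are the parts `A_i`, `B_i`; what is left over forms `A_0` and `B_0`.
-/

open SimpleGraph

section Development

variable {V : Type*}

def nbhd (G : SimpleGraph V) (X : Set V) : Set V := {v | ∃ x ∈ X, G.Adj x v}

lemma nbhd_mono {G : SimpleGraph V} {X Y : Set V} (h : X ⊆ Y) : nbhd G X ⊆ nbhd G Y :=
  fun _ ⟨x, hx, hadj⟩ => ⟨x, h hx, hadj⟩

lemma nbhd_union (G : SimpleGraph V) (X Y : Set V) :
    nbhd G (X ∪ Y) = nbhd G X ∪ nbhd G Y := by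
  ext v
  simp [nbhd, or_and_right, exists_or]

namespace BipartitionOf

variable {G : SimpleGraph V} {A B : Set V}

lemma mem_or_mem (h : BipartitionOf G A B) (v : V) : v ∈ A ∨ v ∈ B :=
  (Set.ext_iff.mp h.1 v).mpr trivial

lemma notMem_B (h : BipartitionOf G A B) {x : V} (hx : x ∈ A) : x ∉ B :=
  Set.disjoint_left.mp h.2.1 hx

lemma compl_eq (h : BipartitionOf G A B) : Aᶜ = B :=
  Set.ext fun v => ⟨(h.mem_or_mem v).resolve_left, fun hB hA => h.notMem_B hA hB⟩

lemma mem_B_of_adj (h : BipartitionOf G A B) {x y : V} (hxy : G.Adj x y) (hx : x ∈ A) :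
    y ∈ B :=
  (h.2.2 hxy).mp hx

lemma mem_A_of_adj (h : BipartitionOf G A B) {x y : V} (hxy : G.Adj x y) (hx : x ∈ B) :
    y ∈ A :=
  (h.2.2 hxy.symm).mpr hx

lemma mono (h : BipartitionOf G A B) {G' : SimpleGraph V} (hle : G' ≤ G) :
    BipartitionOf G' A B :=
  ⟨h.1, h.2.1, fun _ _ hxy => h.2.2 (hle hxy)⟩

lemma nbhd_subset (h : BipartitionOf G A B) {X : Set V} (hX : X ⊆ A) : nbhd G X ⊆ B :=
  fun _ ⟨_, hx, hadj⟩ => h.mem_B_of_adj hadj (hX hx)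

end BipartitionOf

section Matchings

variable {G : SimpleGraph V}

lemma SimpleGraph.Subgraph.IsPerfectMatching.ncard_le_of_forall_adj [Finite V]
    {M : G.Subgraph} (hM : M.IsPerfectMatching) {X Y : Set V}
    (h : ∀ x ∈ X, ∀ y, M.Adj x y → y ∈ Y) :
    X.ncard ≤ Y.ncard := by
  choose f hf using fun v => hM.1 (hM.2 v)
  refine Set.ncard_le_ncard_of_injOn f (fun x hx => h x hx _ (hf x).1) ?_
  intro x _ x' _ hxx'
  exact hM.1.eq_of_adj_right (hf x).1 (hxx' ▸ (hf x').1)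

lemma exists_isPerfectMatching_of_range_eq_compl {A : Set V} (f : A → V)
    (hf : Function.Injective f) (hrange : Set.range f = Aᶜ) (hadj : ∀ x : A, G.Adj x (f x)) :
    ∃ M : G.Subgraph, M.IsPerfectMatching ∧ ∀ x : A, M.Adj x (f x) := by
  have hfA : ∀ x, f x ∉ A := fun x => hrange.subset ⟨x, rfl⟩
  refine ⟨⨆ x, G.subgraphOfAdj (hadj x), ⟨?_, ?_⟩,
    fun x => Subgraph.iSup_adj.mpr ⟨x, G.subgraphOfAdj_adj_self _⟩⟩
  · refine Subgraph.IsMatching.iSup (fun _ => .subgraphOfAdj _) ?_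
    intro x x' hxx'
    simp only [support_subgraphOfAdj, Set.disjoint_insert_left,
      Set.mem_insert_iff, Set.mem_singleton_iff, Set.disjoint_singleton_left, not_or]
    refine ⟨⟨Subtype.coe_injective.ne hxx', fun h => hfA x' (h ▸ x.2)⟩,
      fun h => hfA x (h ▸ x'.2), hf.ne hxx'⟩
  · intro v
    rw [Subgraph.verts_iSup, Set.mem_iUnion]
    by_cases hv : v ∈ A
    · exact ⟨⟨v, hv⟩, Set.mem_insert _ _⟩
    · obtain ⟨x, rfl⟩ := hrange.symm.subset hv
      exact ⟨x, Set.mem_insert_of_mem _ rfl⟩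

lemma BipartitionOf.ncard_eq_of_isPerfectMatching {A B : Set V} [Finite V]
    (hbip : BipartitionOf G A B) {M : G.Subgraph} (hM : M.IsPerfectMatching) :
    A.ncard = B.ncard :=
  le_antisymm (hM.ncard_le_of_forall_adj fun _ hx _ hxy => hbip.mem_B_of_adj (M.adj_sub hxy) hx)
    (hM.ncard_le_of_forall_adj fun _ hx _ hxy => hbip.mem_A_of_adj (M.adj_sub hxy) hx)

end Matchings

lemma exists_injective_of_forall_ncard_le {α β : Type*} [Finite β] (r : α → β → Prop)
    (A : Set α) (h : ∀ X ⊆ A, X.ncard ≤ {y | ∃ x ∈ X, r x y}.ncard) :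
    ∃ f : A → β, Function.Injective f ∧ ∀ x : A, r x (f x) := by
  classical
  have := Fintype.ofFinite β
  refine (Fintype.all_card_le_filter_rel_iff_exists_injective fun (x : A) y => r x y).mp
    fun s => ?_
  have hs := h (Subtype.val '' (s : Set A)) (by simp)
  rw [Set.ncard_image_of_injective _ Subtype.val_injective, Set.ncard_coe_finset] at hs
  convert hs using 1
  rw [← Set.ncard_coe_finset]
  congr 1
  ext y
  simp

section Hall

variable [Finite V] {G : SimpleGraph V} {A B : Set V}

/-- Hall's condition for the edges that match `p` only to `q`: removing `q` from the
neighbourhoods costs at most the surplus of the strict Hall condition. -/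
lemma ncard_le_ncard_adj_of_forall_ncard_lt
    (hhall : ∀ X ⊆ A, X.Nonempty → (A \ X).Nonempty → X.ncard < (nbhd G X).ncard)
    {p q : V} (hpq : G.Adj p q) (hp : p ∈ A) {X : Set V} (hX : X ⊆ A) :
    X.ncard ≤ {y | ∃ x ∈ X, G.Adj x y ∧ (x = p ↔ y = q)}.ncard := by
  set R := {y | ∃ x ∈ X, G.Adj x y ∧ (x = p ↔ y = q)}
  have hsub : nbhd G (X \ {p}) \ {q} ⊆ R := fun y ⟨⟨x, hx, hxy⟩, hyq⟩ =>
    ⟨x, hx.1, hxy, iff_of_false hx.2 hyq⟩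
  have hX' : (X \ {p}).ncard ≤ (nbhd G (X \ {p}) \ {q}).ncard := by
    rcases (X \ {p}).eq_empty_or_nonempty with h | h
    · simp [h]
    · have := hhall _ (Set.sdiff_subset.trans hX) h ⟨p, hp, fun h => h.2 rfl⟩
      have := Set.ncard_le_ncard_sdiff_add_ncard (nbhd G (X \ {p})) {q}
      rw [Set.ncard_singleton] at this
      omega
  by_cases hpX : p ∈ X
  · have hqR : q ∈ R := ⟨p, hpX, hpq, iff_of_true rfl rfl⟩
    calc X.ncard = (X \ {p}).ncard + 1 := (Set.ncard_sdiff_singleton_add_one hpX).symm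
      _ ≤ (insert q (nbhd G (X \ {p}) \ {q})).ncard := by
        rw [Set.ncard_insert_of_notMem fun h => h.2 rfl]
        omega
      _ ≤ R.ncard := Set.ncard_le_ncard (Set.insert_subset hqR hsub)
  · rw [Set.sdiff_singleton_eq_self hpX] at hX' hsub
    exact hX'.trans (Set.ncard_le_ncard hsub)

lemma BipartitionOf.exists_isPerfectMatching_adj (hbip : BipartitionOf G A B)
    (hAB : A.ncard = B.ncard)
    (hhall : ∀ X ⊆ A, X.Nonempty → (A \ X).Nonempty → X.ncard < (nbhd G X).ncard)
    {p q : V} (hpq : G.Adj p q) (hp : p ∈ A) :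
    ∃ M : G.Subgraph, M.IsPerfectMatching ∧ M.Adj p q := by
  obtain ⟨f, hf, hfr⟩ := exists_injective_of_forall_ncard_le _ A
    fun X hX => ncard_le_ncard_adj_of_forall_ncard_lt hhall hpq hp hX
  have hrange : Set.range f = Aᶜ := by
    rw [hbip.compl_eq]
    refine Set.eq_of_subset_of_ncard_le ?_ ?_
    · rintro _ ⟨x, rfl⟩
      exact hbip.mem_B_of_adj (hfr x).1 x.2
    · rw [Set.ncard_range_of_injective hf, Nat.card_coe_set_eq, hAB]
  obtain ⟨M, hM, hMf⟩ :=
    exists_isPerfectMatching_of_range_eq_compl f hf hrange fun x => (hfr x).1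
  refine ⟨M, hM, ?_⟩
  simpa only [(hfr ⟨p, hp⟩).2.mp rfl] using hMf ⟨p, hp⟩

lemma BipartitionOf.matchingCovered_of_forall_ncard_lt (hbip : BipartitionOf G A B)
    (hAB : A.ncard = B.ncard) (hcard : 2 ≤ Nat.card V) (hconn : G.Connected)
    (hhall : ∀ X ⊆ A, X.Nonempty → (A \ X).Nonempty → X.ncard < (nbhd G X).ncard) :
    MatchingCovered G := by
  refine ⟨hcard, hconn, fun e he => ?_⟩
  induction e using Sym2.ind with
  | _ x y =>
    rcases hbip.mem_or_mem x with hx | hx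
    · obtain ⟨M, hM, hxy⟩ := hbip.exists_isPerfectMatching_adj hAB hhall he hx
      exact ⟨M, hM, hxy⟩
    · obtain ⟨M, hM, hyx⟩ := hbip.exists_isPerfectMatching_adj hAB hhall
        (G.adj_symm he) (hbip.mem_A_of_adj he hx)
      exact ⟨M, hM, hyx.symm⟩

end Hall

namespace MatchingCovered

variable [Finite V] {G : SimpleGraph V} {A B : Set V}

lemma exists_isPerfectMatching (hMC : MatchingCovered G) :
    ∃ M : G.Subgraph, M.IsPerfectMatching := by
  obtain ⟨hcard, hconn, hpm⟩ := hMC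
  have : Nontrivial V := Finite.one_lt_card_iff_nontrivial.mp hcard
  obtain ⟨v⟩ := hconn.nonempty
  obtain ⟨w, hvw⟩ := hconn.preconnected.exists_adj_of_nontrivial v
  obtain ⟨M, hM, -⟩ := hpm s(v, w) hvw
  exact ⟨M, hM⟩

lemma ncard_eq (hMC : MatchingCovered G) (hbip : BipartitionOf G A B) : A.ncard = B.ncard :=
  hbip.ncard_eq_of_isPerfectMatching hMC.exists_isPerfectMatching.choose_spec

/-- Strict Hall condition: connectivity yields an edge `ts` with `s ∈ N(X)` and `t ∈ A \ X`,
and a perfect matching through `ts` maps `X` into `N(X) \ {s}`. -/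
lemma ncard_lt_ncard_nbhd (hMC : MatchingCovered G) (hbip : BipartitionOf G A B)
    {X : Set V} (hXA : X ⊆ A) (hne : X.Nonempty) (hpr : (A \ X).Nonempty) :
    X.ncard < (nbhd G X).ncard := by
  obtain ⟨x, hx⟩ := hne
  obtain ⟨z, hzA, hzX⟩ := hpr
  have hzN : z ∉ X ∪ nbhd G X := fun h =>
    h.elim hzX fun hz => hbip.notMem_B hzA (hbip.nbhd_subset hXA hz)
  obtain ⟨walk⟩ := hMC.2.1.preconnected x z
  obtain ⟨⟨⟨s, t⟩, hst⟩, -, hs, ht⟩ := walk.exists_boundary_dart _ (Or.inl hx) hzN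
  have hsN : s ∈ nbhd G X := hs.resolve_left fun hsX => ht (Or.inr ⟨s, hsX, hst⟩)
  have htX : t ∉ X := fun htX => ht (Or.inl htX)
  obtain ⟨M, hM, hts⟩ := hMC.2.2 s(t, s) (G.adj_symm hst)
  have hmaps : ∀ x ∈ X, ∀ y, M.Adj x y → y ∈ nbhd G X \ {s} := fun x hx y hxy =>
    ⟨⟨x, hx, M.adj_sub hxy⟩,
      fun hys => htX ((hM.1.eq_of_adj_right hts (hys ▸ hxy) : t = x) ▸ hx)⟩
  have := hM.ncard_le_of_forall_adj hmaps
  have := Set.ncard_sdiff_singleton_add_one hsN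
  omega

lemma ncard_nbhd_inter_le (hMC : MatchingCovered G) (hbip : BipartitionOf G A B)
    {X Y : Set V} (hXA : X ⊆ A) (hYA : Y ⊆ A) (hne : (X ∪ Y).Nonempty)
    (hpr : (A \ (X ∪ Y)).Nonempty) (hX : (nbhd G X).ncard ≤ X.ncard + 1)
    (hY : (nbhd G Y).ncard ≤ Y.ncard + 1) :
    (nbhd G X ∩ nbhd G Y).ncard ≤ (X ∩ Y).ncard + 1 := by
  have hU := hMC.ncard_lt_ncard_nbhd hbip (Set.union_subset hXA hYA) hne hpr
  rw [nbhd_union] at hU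
  have := Set.ncard_inter_add_ncard_union X Y
  have := Set.ncard_inter_add_ncard_union (nbhd G X) (nbhd G Y)
  omega

end MatchingCovered

structure IsTightAt (G : SimpleGraph V) (A X : Set V) (u v : V) : Prop where
  subset : X ⊆ A
  mem : u ∈ X
  adj : G.Adj u v
  ncard_nbhd : (nbhd G X).ncard = X.ncard + 1
  eq_of_adj : ∀ x ∈ X, G.Adj x v → x = u

namespace MatchingCovered

variable [Finite V] {G : SimpleGraph V} {A B : Set V}

/-- Either `G - uv` is connected, and Hall's theorem gives the deficient set, or `uv` is a
bridge, and the side of `u` is deficient since a perfect matching of `G` maps its part in `B`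
into its part in `A`. -/
lemma exists_deficient_of_not_removable (hMC : MatchingCovered G) (hbip : BipartitionOf G A B)
    {u v w : V} (hu : u ∈ A) (huv : G.Adj u v) (hwv : G.Adj w v) (hwu : w ≠ u)
    (hnr : ¬ RemovableEdge G s(u, v)) :
    ∃ X ⊆ A, X.Nonempty ∧ (A \ X).Nonempty ∧
      (nbhd (G.deleteEdges {s(u, v)}) X).ncard ≤ X.ncard := by
  set G' := G.deleteEdges {s(u, v)}
  have hbip' : BipartitionOf G' A B := hbip.mono (G.deleteEdges_le _)
  by_cases hconn : G'.Connected
  · by_contra! hno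
    exact hnr ⟨huv,
      hbip'.matchingCovered_of_forall_ncard_lt (hMC.ncard_eq hbip) hMC.1 hconn hno⟩
  have hbridge : ¬ G'.Reachable u v := fun h =>
    hconn (hMC.2.1.connected_delete_edge_of_not_isBridge (not_not.mpr h))
  have hvB : v ∈ B := hbip.mem_B_of_adj huv hu
  have hG'adj : ∀ {x y}, G.Adj x y → x ≠ u → x ≠ v → G'.Adj x y := fun hxy hxu hxv =>
    deleteEdges_adj.mpr ⟨hxy, by simp [hxu, hxv]⟩
  set S := {x | G'.Reachable u x}
  have hS : ∀ {x y}, x ∈ S → G'.Adj x y → y ∈ S := fun hx hxy => hx.trans hxy.reachable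
  refine ⟨S ∩ A, Set.inter_subset_right, ⟨u, Reachable.refl u, hu⟩,
    ⟨w, hbip.mem_A_of_adj (G.adj_symm hwv) hvB,
      fun hw => hbridge (hS hw.1 (hG'adj hwv hwu hwv.ne))⟩, ?_⟩
  obtain ⟨M, hM⟩ := hMC.exists_isPerfectMatching
  calc (nbhd G' (S ∩ A)).ncard
      ≤ (S ∩ B).ncard := Set.ncard_le_ncard fun y ⟨x, hx, hxy⟩ =>
        ⟨hS hx.1 hxy, hbip'.mem_B_of_adj hxy hx.2⟩
    _ ≤ (S ∩ A).ncard := hM.ncard_le_of_forall_adj fun y hy z hyz =>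
        ⟨hS hy.1 (hG'adj (M.adj_sub hyz) (fun h => hbip.notMem_B hu (h ▸ hy.2))
          fun h => hbridge (h ▸ hy.1)), hbip.mem_A_of_adj (M.adj_sub hyz) hy.2⟩

lemma exists_isTightAt_of_not_removable (hMC : MatchingCovered G) (hbip : BipartitionOf G A B)
    {u v w : V} (hu : u ∈ A) (huv : G.Adj u v) (hwv : G.Adj w v) (hwu : w ≠ u)
    (hnr : ¬ RemovableEdge G s(u, v)) :
    ∃ X, IsTightAt G A X u v := by
  obtain ⟨X, hXA, hne, hpr, hdef⟩ :=
    hMC.exists_deficient_of_not_removable hbip hu huv hwv hwu hnr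
  set G' := G.deleteEdges {s(u, v)}
  have hvB : v ∈ B := hbip.mem_B_of_adj huv hu
  have hsub : nbhd G X ⊆ insert v (nbhd G' X) := by
    rintro y ⟨x, hx, hxy⟩
    by_cases hyv : y = v
    · exact Or.inl hyv
    · refine Or.inr ⟨x, hx, deleteEdges_adj.mpr ⟨hxy, ?_⟩⟩
      simp only [Set.mem_singleton_iff, Sym2.eq_iff, hyv, and_false, false_or, not_and]
      exact fun hxv => absurd (hxv ▸ hXA hx) (hbip.notMem_B · hvB)
  have hlt := hMC.ncard_lt_ncard_nbhd hbip hXA hne hpr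
  have hins := Set.ncard_insert_le v (nbhd G' X)
  have hle := Set.ncard_le_ncard hsub
  have hvG' : v ∉ nbhd G' X := fun hv => by
    rw [Set.insert_eq_of_mem hv] at hle
    omega
  have honly : ∀ x ∈ X, G.Adj x v → x = u := fun x hx hxv => by_contra fun hxu =>
    hvG' ⟨x, hx, deleteEdges_adj.mpr ⟨hxv, fun h => hxu (Sym2.congr_left.mp h)⟩⟩
  have hvN : v ∈ nbhd G X := by
    by_contra hv
    have := Set.ncard_le_ncard fun y hy => (hsub hy).resolve_left fun h => hv (h ▸ hy)
    omega
  obtain ⟨x, hx, hxv⟩ := hvN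
  exact ⟨X, hXA, honly x hx hxv ▸ hx, huv, by omega, honly⟩

/-- A common vertex of `X` and `Y` would give, by uncrossing, `N(X ∩ Y) = N(X) ∩ N(Y) ∋ v`. -/
lemma disjoint_of_isTightAt (hMC : MatchingCovered G) (hbip : BipartitionOf G A B)
    {X Y : Set V} {u u' v w : V} (hX : IsTightAt G A X u v) (hY : IsTightAt G A Y u' v)
    (huu' : u ≠ u') (hwv : G.Adj w v) (hwu : w ≠ u) (hwu' : w ≠ u') :
    Disjoint X Y ∧ Disjoint (nbhd G X \ {v}) (nbhd G Y \ {v}) := by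
  have hvB : v ∈ B := hbip.mem_B_of_adj hX.adj (hX.subset hX.mem)
  have hwXY : w ∈ A \ (X ∪ Y) := ⟨hbip.mem_A_of_adj (G.adj_symm hwv) hvB,
    fun h => h.elim (fun hw => hwu (hX.eq_of_adj w hw hwv))
      fun hw => hwu' (hY.eq_of_adj w hw hwv)⟩
  have hle := hMC.ncard_nbhd_inter_le hbip hX.subset hY.subset ⟨u, Or.inl hX.mem⟩ ⟨w, hwXY⟩
    hX.ncard_nbhd.le hY.ncard_nbhd.le
  have hvXY : v ∈ nbhd G X ∩ nbhd G Y := ⟨⟨u, hX.mem, hX.adj⟩, ⟨u', hY.mem, hY.adj⟩⟩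
  have hdisj : Disjoint X Y := by
    rw [Set.disjoint_iff_inter_eq_empty, ← Set.not_nonempty_iff_eq_empty]
    intro hZ
    have hZA : X ∩ Y ⊆ A := Set.inter_subset_left.trans hX.subset
    have hlt := hMC.ncard_lt_ncard_nbhd hbip hZA hZ
      ⟨w, hwXY.1, fun h => hwXY.2 (Or.inl h.1)⟩
    have hN : nbhd G (X ∩ Y) = nbhd G X ∩ nbhd G Y := Set.eq_of_subset_of_ncard_le
      (Set.subset_inter (nbhd_mono Set.inter_subset_left) (nbhd_mono Set.inter_subset_right))
      (by omega)
    obtain ⟨z, hz, hzv⟩ := hN ▸ hvXY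
    exact huu' ((hX.eq_of_adj z hz.1 hzv).symm.trans (hY.eq_of_adj z hz.2 hzv))
  refine ⟨hdisj, Set.disjoint_left.mpr fun y hyX hyY => hyX.2 ?_⟩
  rw [hdisj.inter_eq, Set.ncard_empty, zero_add, Set.ncard_le_one_iff] at hle
  exact hle ⟨hyX.1, hyY.1⟩ hvXY

end MatchingCovered

end Development

section FinCons

variable {α : Type*} {r : ℕ} {X : Fin r → Set α}

lemma iUnion_cons_sdiff_iUnion {s : Set α} (h : ∀ i, X i ⊆ s) :
    ⋃ i, (Fin.cons (s \ ⋃ j, X j) X : Fin (r + 1) → Set α) i = s := by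
  ext x
  simp only [Set.mem_iUnion, Fin.exists_fin_succ, Fin.cons_zero, Fin.cons_succ, Set.mem_sdiff]
  exact ⟨fun hx => hx.elim And.left fun ⟨i, hi⟩ => h i hi,
    fun hx => (em _).elim (fun h => Or.inr h) fun h => Or.inl ⟨hx, h⟩⟩

lemma pairwise_disjoint_cons_sdiff_iUnion (s : Set α)
    (h : Pairwise fun i j => Disjoint (X i) (X j)) :
    Pairwise fun i j => Disjoint ((Fin.cons (s \ ⋃ j, X j) X : Fin (r + 1) → Set α) i)
      ((Fin.cons (s \ ⋃ j, X j) X : Fin (r + 1) → Set α) j) := by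
  have hzero : ∀ j, Disjoint (s \ ⋃ j, X j) (X j) := fun j =>
    Set.disjoint_sdiff_left.mono_right (Set.subset_iUnion X j)
  intro i j hij
  cases i using Fin.cases <;> cases j using Fin.cases
  · exact absurd rfl hij
  · exact hzero _
  · exact (hzero _).symm
  · exact h fun h' => hij (congrArg Fin.succ h')

end FinCons

/-- the Lovász–Vempala lemma. -/
theorem stmt8 {V : Type*} [Fintype V] (H : SimpleGraph V) (A B : Set V)
    (hMC : MatchingCovered H) (hbip : BipartitionOf H A B)
    (b : V) (hb : b ∈ B) (d : ℕ) (hd : 3 ≤ d)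
    (a : Fin d → V) (hainj : Function.Injective a)
    (hnbhd : H.neighborSet b = Set.range a)
    (r : ℕ) (hrd : r ≤ d)
    (hnonrem : ∀ i : Fin d, i.val < r → ¬ RemovableEdge H s(b, a i)) :
    ∃ SA SB : Fin (r + 1) → Set V,
      (⋃ i, SA i) = A ∧ (⋃ i, SB i) = B ∧
      (Pairwise fun i j => Disjoint (SA i) (SA j)) ∧
      (Pairwise fun i j => Disjoint (SB i) (SB j)) ∧
      b ∈ SB 0 ∧
      ∀ i : Fin d, ∀ h : i.val < r,
        (SA ⟨i.val + 1, by omega⟩).Nonempty ∧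
        (SB ⟨i.val + 1, by omega⟩).Nonempty ∧
        (SA ⟨i.val + 1, by omega⟩).ncard = (SB ⟨i.val + 1, by omega⟩).ncard ∧
        a i ∈ SA ⟨i.val + 1, by omega⟩ ∧
        {v : V | ∃ x ∈ SA ⟨i.val + 1, by omega⟩, H.Adj x v} =
          SB ⟨i.val + 1, by omega⟩ ∪ {b} := by
  have hadj : ∀ j, H.Adj (a j) b := fun j =>
    H.adj_symm (hnbhd.symm ▸ Set.mem_range_self j : a j ∈ H.neighborSet b)
  have htight : ∀ t : Fin r, ∃ X, IsTightAt H A X (a (Fin.castLE hrd t)) b := fun t => by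
    obtain ⟨k, hk, -⟩ := Fin.exists_ne_and_ne_of_two_lt (Fin.castLE hrd t) (Fin.castLE hrd t) hd
    refine hMC.exists_isTightAt_of_not_removable hbip
      (hbip.mem_A_of_adj (H.adj_symm (hadj _)) hb) (hadj _) (hadj k) (hainj.ne hk) ?_
    rw [Sym2.eq_swap]
    exact hnonrem _ t.isLt
  choose X hX using htight
  have hdisj : ∀ s t, s ≠ t →
      Disjoint (X s) (X t) ∧ Disjoint (nbhd H (X s) \ {b}) (nbhd H (X t) \ {b}) := by
    intro s t hst
    obtain ⟨k, hks, hkt⟩ :=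
      Fin.exists_ne_and_ne_of_two_lt (Fin.castLE hrd s) (Fin.castLE hrd t) hd
    exact hMC.disjoint_of_isTightAt hbip (hX s) (hX t)
      (hainj.ne ((Fin.castLE_injective hrd).ne hst)) (hadj k) (hainj.ne hks) (hainj.ne hkt)
  have hvb : ∀ t, b ∈ nbhd H (X t) := fun t => ⟨_, (hX t).mem, (hX t).adj⟩
  refine ⟨Fin.cons (A \ ⋃ t, X t) X,
    Fin.cons (B \ ⋃ t, nbhd H (X t) \ {b}) fun t => nbhd H (X t) \ {b},
    iUnion_cons_sdiff_iUnion fun t => (hX t).subset,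
    iUnion_cons_sdiff_iUnion fun t => Set.sdiff_subset.trans (hbip.nbhd_subset (hX t).subset),
    pairwise_disjoint_cons_sdiff_iUnion A fun s t hst => (hdisj s t hst).1,
    pairwise_disjoint_cons_sdiff_iUnion B fun s t hst => (hdisj s t hst).2,
    ⟨hb, by simp⟩, fun i hi => ?_⟩
  have hcard : (X ⟨i, hi⟩).ncard = (nbhd H (X ⟨i, hi⟩) \ {b}).ncard := by
    have := Set.ncard_sdiff_singleton_add_one (hvb ⟨i, hi⟩)
    have := (hX ⟨i, hi⟩).ncard_nbhd
    omega
  exact ⟨⟨_, (hX ⟨i, hi⟩).mem⟩,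
    Set.nonempty_of_ncard_ne_zero (hcard ▸ Set.ncard_ne_zero_of_mem (hX ⟨i, hi⟩).mem), hcard,
    (hX ⟨i, hi⟩).mem,
    (Set.sdiff_union_of_subset (Set.singleton_subset_iff.mpr (hvb ⟨i, hi⟩))).symm⟩
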